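/- Let C ⊂ Sⁿ be a spherically convex body. Then C = C° if and only if C is of constant width π/2. -/

import Mathlib

open scoped RealInnerProductSpace
open Real

noncomputable section

/-- The hemisphere of `Sⁿ` centered at `P`. -/
def hemi {n : ℕ} (P : EuclideanSpace ℝ (Fin (n + 1))) :
    Set (EuclideanSpace ℝ (Fin (n + 1))) :=
  {Q | ‖Q‖ = 1 ∧ 0 ≤ ⟪P, Q⟫}

/-- Geodesic (spherical) convexity. -/
def geodesicConvex {n : ℕ} (C : Set (EuclideanSpace ℝ (Fin (n + 1)))) : Prop :=
  ∀ P ∈ C, ∀ Q ∈ C, ∀ a b : ℝ, 0 ≤ a → 0 ≤ b → 0 < a + b →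
    a • P + b • Q ≠ 0 → ‖a • P + b • Q‖⁻¹ • (a • P + b • Q) ∈ C

/-- A spherically convex body in `Sⁿ`. -/
def sConvexBody {n : ℕ} (C : Set (EuclideanSpace ℝ (Fin (n + 1)))) : Prop :=
  (∀ R ∈ C, ‖R‖ = 1) ∧ IsClosed C ∧ geodesicConvex C ∧
    (∃ E0 : EuclideanSpace ℝ (Fin (n + 1)), ‖E0‖ = 1 ∧ ∀ R ∈ C, 0 < ⟪E0, R⟫) ∧
    (∃ U : Set (EuclideanSpace ℝ (Fin (n + 1))), IsOpen U ∧
      (U ∩ {x | ‖x‖ = 1}).Nonempty ∧ U ∩ {x | ‖x‖ = 1} ⊆ C)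

/-- The spherical polar set `C° = ⋂_{P∈C} H(P)`. -/
def sPolar {n : ℕ} (W : Set (EuclideanSpace ℝ (Fin (n + 1)))) :
    Set (EuclideanSpace ℝ (Fin (n + 1))) :=
  ⋂ P ∈ W, hemi P

/-- `H(P)` is a supporting hemisphere of `C`. -/
def isSupporting {n : ℕ} (P : EuclideanSpace ℝ (Fin (n + 1)))
    (C : Set (EuclideanSpace ℝ (Fin (n + 1)))) : Prop :=
  ‖P‖ = 1 ∧ C ⊆ hemi P ∧ ∃ X ∈ C, ⟪P, X⟫ = 0

/-- Width of `C` with respect to the supporting hemisphere `H(P)`. -/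
def widthAt {n : ℕ} (C : Set (EuclideanSpace ℝ (Fin (n + 1))))
    (P : EuclideanSpace ℝ (Fin (n + 1))) : ℝ :=
  sInf {t | ∃ Q, isSupporting Q C ∧ t = π - Real.arccos ⟪P, Q⟫}

/-- `C` is of constant width `τ`. -/
def constWidth {n : ℕ} (C : Set (EuclideanSpace ℝ (Fin (n + 1)))) (τ : ℝ) : Prop :=
  ∀ P, isSupporting P C → widthAt C P = τ

/-!
Write `D` for the inner dual cone of `C`, so that `C° = D ∩ Sⁿ`, and `m = innerMin C`, i.e.
`m Q = min_{X ∈ C} ⟪Q, X⟫`; the supporting poles are the unit vectors with `m Q = 0`.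

If `C = C°`, every supporting pole lies in `C = C°`, so all widths are at least `π/2`, and a
contact point of a supporting hemisphere is itself a supporting pole orthogonal to it.

Conversely, width `π/2` says that supporting poles pairwise make non-obtuse angles and that each
has an orthogonal partner. A pair minimizing `⟪a, b⟫` on `C° × C°` consists of supporting poles,
so `D ⊆ D*`; separating a point of `C° \ C` from the closed convex cone over `C` would contradict
this. If `z ∈ C` had `m z < 0`, the intermediate value theorem on the segment from a pole `E`
with `m E > 0` to `z` gives a supporting pole `p`; its orthogonal partner `q` has
`⟪E, q⟫ ≥ m E > 0` (as `E - (m E) q ∈ D ⊆ D*`) and `⟪z, q⟫ ≥ 0`, so `⟪p, q⟫ > 0`.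
-/

open Set Pointwise

section InnerMin

variable {E : Type*} [NormedAddCommGroup E] [InnerProductSpace ℝ E] {C : Set E} {Q : E}

def innerMin (C : Set E) (Q : E) : ℝ :=
  sInf ((fun X => ⟪Q, X⟫) '' C)

lemma innerMin_le (hC : IsCompact C) {X : E} (hX : X ∈ C) : innerMin C Q ≤ ⟪Q, X⟫ :=
  csInf_le (hC.bddBelow_image (continuous_const.inner continuous_id).continuousOn)
    (mem_image_of_mem _ hX)

lemma le_innerMin (hne : C.Nonempty) {c : ℝ} (h : ∀ X ∈ C, c ≤ ⟪Q, X⟫) : c ≤ innerMin C Q :=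
  le_csInf (hne.image _) (forall_mem_image.2 h)

lemma exists_inner_eq_innerMin (hC : IsCompact C) (hne : C.Nonempty) (Q : E) :
    ∃ X ∈ C, ⟪Q, X⟫ = innerMin C Q :=
  (hC.image (continuous_const.inner continuous_id)).sInf_mem (hne.image _)

lemma continuous_innerMin (hC : IsCompact C) : Continuous (innerMin C) :=
  hC.continuous_sInf (f := fun Q X => ⟪Q, X⟫) continuous_inner

lemma innerMin_nonneg_iff (hC : IsCompact C) (hne : C.Nonempty) :
    0 ≤ innerMin C Q ↔ ∀ X ∈ C, 0 ≤ ⟪Q, X⟫ :=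
  ⟨fun h _ hX => h.trans (innerMin_le hC hX), le_innerMin hne⟩

lemma exists_innerMin_segment_eq_zero (hC : IsCompact C) {a b : E} (ha : 0 < innerMin C a)
    (hb : innerMin C b < 0) : ∃ t ∈ Ico (0 : ℝ) 1, innerMin C ((1 - t) • a + t • b) = 0 := by
  have hcont : Continuous fun t : ℝ => innerMin C ((1 - t) • a + t • b) :=
    (continuous_innerMin hC).comp (by fun_prop)
  obtain ⟨t, ⟨ht0, ht1⟩, ht⟩ := intermediate_value_Icc' zero_le_one hcont.continuousOn
    ⟨by simpa using hb.le, by simpa using ha.le⟩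
  refine ⟨t, ⟨ht0, ht1.lt_of_ne ?_⟩, ht⟩
  rintro rfl
  exact hb.ne (by simpa using ht)

end InnerMin

section Cone

variable {E : Type*} [NormedAddCommGroup E] [InnerProductSpace ℝ E] {C : Set E}

open Metric in
lemma isClosed_Ici_smul (hC : IsCompact C) (hunit : ∀ X ∈ C, ‖X‖ = 1) :
    IsClosed (Ici (0 : ℝ) • C) := by
  refine isClosed_of_closure_subset fun y hy => ?_
  have hbounded : ball y 1 ∩ Ici (0 : ℝ) • C ⊆ Icc 0 (‖y‖ + 1) • C := by
    rintro _ ⟨hball, r, hr, X, hX, rfl⟩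
    refine ⟨r, ⟨hr, ?_⟩, X, hX, rfl⟩
    have hnorm : ‖r • X‖ = r := by rw [norm_smul, hunit X hX, mul_one, Real.norm_of_nonneg hr]
    have := norm_le_norm_add_norm_sub' (r • X) y
    rw [mem_ball, dist_eq_norm] at hball
    linarith
  have hy' := (isCompact_Icc.smul_set hC).isClosed.closure_subset_iff.2 hbounded
    (isOpen_ball.inter_closure ⟨mem_ball_self one_pos, hy⟩)
  exact smul_subset_smul_right Icc_subset_Ici_self hy'

end Cone

section Sphere

variable {n : ℕ} {C : Set (EuclideanSpace ℝ (Fin (n + 1)))}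
  {P Q X a u : EuclideanSpace ℝ (Fin (n + 1))}

lemma isClosed_hemi (P : EuclideanSpace ℝ (Fin (n + 1))) : IsClosed (hemi P) :=
  show IsClosed ({Q | ‖Q‖ = 1} ∩ {Q | 0 ≤ ⟪P, Q⟫}) from
    (isClosed_eq continuous_norm continuous_const).inter
      (isClosed_le continuous_const (continuous_const.inner continuous_id))

lemma mem_hemi_of_mem_sPolar (hQ : Q ∈ sPolar C) (hX : X ∈ C) : Q ∈ hemi X :=
  mem_iInter₂.1 hQ X hX

lemma mem_sPolar_iff (hne : C.Nonempty) :
    a ∈ sPolar C ↔ ‖a‖ = 1 ∧ a ∈ ProperCone.innerDual C := by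
  simp only [sPolar, mem_iInter₂, hemi, mem_ofPred_eq, ProperCone.mem_innerDual]
  refine ⟨fun h => ⟨(h _ hne.some_mem).1, fun X hX => (h X hX).2⟩,
    fun h X hX => ⟨h.1, h.2 hX⟩⟩

lemma isCompact_sPolar (hne : C.Nonempty) : IsCompact (sPolar C) :=
  Metric.isCompact_of_isClosed_isBounded (isClosed_biInter fun P _ => isClosed_hemi P)
    (Metric.isBounded_sphere.subset fun _ ha =>
      mem_sphere_zero_iff_norm.2 ((mem_sPolar_iff hne).1 ha).1)

lemma inv_norm_smul_mem_sPolar (hne : C.Nonempty) (hu : u ∈ ProperCone.innerDual C)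
    (hu0 : u ≠ 0) : ‖u‖⁻¹ • u ∈ sPolar C :=
  (mem_sPolar_iff hne).2 ⟨norm_smul_inv_norm hu0, ProperCone.mem_innerDual.2 fun X hX => by
    rw [real_inner_smul_right]; exact mul_nonneg (by positivity) (hu hX)⟩

lemma isSupporting.mem_innerDual (hP : isSupporting P C) : P ∈ ProperCone.innerDual C :=
  ProperCone.mem_innerDual.2 fun X hX => real_inner_comm X P ▸ (hP.2.1 hX).2

lemma isSupporting.mem_sPolar (hP : isSupporting P C) : P ∈ sPolar C :=
  mem_iInter₂.2 fun _ hX => ⟨hP.1, hP.mem_innerDual hX⟩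

lemma isSupporting_iff (hcomp : IsCompact C) (hne : C.Nonempty) (hunit : ∀ X ∈ C, ‖X‖ = 1) :
    isSupporting Q C ↔ ‖Q‖ = 1 ∧ innerMin C Q = 0 := by
  constructor
  · rintro ⟨hQ, hsub, X, hX, hQX⟩
    exact ⟨hQ, le_antisymm (hQX ▸ innerMin_le hcomp hX) (le_innerMin hne fun Y hY => (hsub hY).2)⟩
  · rintro ⟨hQ, hmin⟩
    obtain ⟨X, hX, hQX⟩ := exists_inner_eq_innerMin hcomp hne Q
    exact ⟨hQ, fun Y hY => ⟨hunit Y hY, hmin ▸ innerMin_le hcomp hY⟩, X, hX, hQX.trans hmin⟩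

lemma isSupporting_inv_norm_smul (hcomp : IsCompact C) (hne : C.Nonempty)
    (hunit : ∀ X ∈ C, ‖X‖ = 1) (hQ0 : Q ≠ 0) (hQ : innerMin C Q = 0) :
    isSupporting (‖Q‖⁻¹ • Q) C := by
  obtain ⟨X, hX, hQX⟩ := exists_inner_eq_innerMin hcomp hne Q
  refine ⟨norm_smul_inv_norm hQ0, fun Y hY => ⟨hunit Y hY, ?_⟩, X, hX, ?_⟩
  · rw [real_inner_smul_left]
    exact mul_nonneg (by positivity) (hQ ▸ innerMin_le hcomp hY)
  · rw [real_inner_smul_left, hQX, hQ, mul_zero]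

lemma isCompact_setOf_isSupporting (hcomp : IsCompact C) (hne : C.Nonempty)
    (hunit : ∀ X ∈ C, ‖X‖ = 1) : IsCompact {Q | isSupporting Q C} := by
  simp_rw [isSupporting_iff hcomp hne hunit]
  exact Metric.isCompact_of_isClosed_isBounded
    ((isClosed_eq continuous_norm continuous_const).inter
      (isClosed_eq (continuous_innerMin hcomp) continuous_const))
    (Metric.isBounded_sphere.subset fun _ hQ => mem_sphere_zero_iff_norm.2 hQ.1)

lemma widthAt_le (hQ : isSupporting Q C) : widthAt C P ≤ π - arccos ⟪P, Q⟫ :=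
  csInf_le ⟨0, by rintro _ ⟨Q', -, rfl⟩; linarith [arccos_le_pi ⟪P, Q'⟫]⟩ ⟨Q, hQ, rfl⟩

lemma le_widthAt {c : ℝ} (hP : isSupporting P C)
    (h : ∀ Q, isSupporting Q C → c ≤ π - arccos ⟪P, Q⟫) : c ≤ widthAt C P :=
  le_csInf ⟨_, P, hP, rfl⟩ (by rintro _ ⟨Q, hQ, rfl⟩; exact h Q hQ)

lemma constWidth_of_eq_sPolar (h : C = sPolar C) : constWidth C (π / 2) := by
  intro P hP
  obtain ⟨X, hX, hPX⟩ := hP.2.2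
  have hPC : P ∈ C := h ▸ hP.mem_sPolar
  have hXpolar : X ∈ sPolar C := h ▸ hX
  have hX : isSupporting X C := by
    refine ⟨(mem_hemi_of_mem_sPolar hXpolar hPC).1, fun Y hY => ⟨?_, ?_⟩, P, hPC, ?_⟩
    · exact (mem_hemi_of_mem_sPolar (h ▸ hY : Y ∈ sPolar C) hPC).1
    · exact real_inner_comm Y X ▸ (mem_hemi_of_mem_sPolar hXpolar hY).2
    · rwa [real_inner_comm]
  refine le_antisymm ?_ (le_widthAt hP fun Q hQ => ?_)
  · have := widthAt_le (P := P) hX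
    rw [hPX, arccos_zero] at this
    linarith
  · have := arccos_le_pi_div_two.2 (mem_hemi_of_mem_sPolar hQ.mem_sPolar hPC).2
    linarith

end Sphere

section ConstWidth

variable {n : ℕ} {C : Set (EuclideanSpace ℝ (Fin (n + 1)))}
  {P Q a b : EuclideanSpace ℝ (Fin (n + 1))}

lemma inner_nonneg_of_constWidth (hW : constWidth C (π / 2)) (hP : isSupporting P C)
    (hQ : isSupporting Q C) : 0 ≤ ⟪P, Q⟫ := by
  have := hW P hP ▸ widthAt_le (P := P) hQ
  exact arccos_le_pi_div_two.1 (by linarith)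

lemma exists_isSupporting_inner_eq_zero (hcomp : IsCompact C) (hne : C.Nonempty)
    (hunit : ∀ X ∈ C, ‖X‖ = 1) (hW : constWidth C (π / 2)) (hP : isSupporting P C) :
    ∃ Q, isSupporting Q C ∧ ⟪P, Q⟫ = 0 := by
  obtain ⟨q, hq, hmin⟩ := (isCompact_setOf_isSupporting hcomp hne hunit).exists_isMinOn
    (f := fun Q => ⟪P, Q⟫) ⟨P, hP⟩ (by fun_prop)
  refine ⟨q, hq, le_antisymm ?_ (inner_nonneg_of_constWidth hW hP hq)⟩
  by_contra! hpos
  have := le_widthAt (c := π - arccos ⟪P, q⟫) hP fun Q hQ => by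
    have hqQ : ⟪P, q⟫ ≤ ⟪P, Q⟫ := hmin hQ
    linarith [arccos_le_arccos hqQ]
  rw [hW P hP] at this
  linarith [arccos_lt_pi_div_two.2 hpos]

lemma sub_innerMin_smul_mem_innerDual (hcomp : IsCompact C) (hunit : ∀ X ∈ C, ‖X‖ = 1)
    (hb : ‖b‖ = 1) (ha : 0 ≤ innerMin C a) :
    a - innerMin C a • b ∈ ProperCone.innerDual C := by
  refine ProperCone.mem_innerDual.2 fun X hX => ?_
  have hXa : innerMin C a ≤ ⟪X, a⟫ := real_inner_comm a X ▸ innerMin_le hcomp hX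
  have hXb : ⟪X, b⟫ ≤ 1 := by simpa [hunit X hX, hb] using real_inner_le_norm X b
  rw [inner_sub_right, real_inner_smul_right]
  nlinarith

lemma isSupporting_of_forall_inner_le (hcomp : IsCompact C) (hne : C.Nonempty)
    (hunit : ∀ X ∈ C, ‖X‖ = 1) (ha : a ∈ sPolar C) (hb : b ∈ sPolar C)
    (hmin : ∀ v ∈ sPolar C, ⟪a, b⟫ ≤ ⟪v, b⟫) (hneg : ⟪a, b⟫ < 0) : isSupporting a C := by
  obtain ⟨ha1, haD⟩ := (mem_sPolar_iff hne).1 ha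
  obtain ⟨hb1, hbD⟩ := (mem_sPolar_iff hne).1 hb
  set ε := innerMin C a
  have hε : 0 ≤ ε := (innerMin_nonneg_iff hcomp hne).2 fun X hX =>
    real_inner_comm X a ▸ ProperCone.mem_innerDual.1 haD hX
  refine (isSupporting_iff hcomp hne hunit).2 ⟨ha1, le_antisymm ?_ hε⟩
  -- if `a` were interior to `D`, moving it towards `-b` would decrease `⟪·, b⟫` on `C°`
  by_contra! hεpos
  set v := a - ε • b
  have hvb : ⟪v, b⟫ = ⟪a, b⟫ - ε := by
    rw [inner_sub_left, real_inner_smul_left, real_inner_self_eq_norm_sq, hb1]; ring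
  have hmin' : ⟪a, b⟫ * ‖v‖ ≤ ⟪v, b⟫ := by
    rcases eq_or_ne v 0 with hv0 | hv0
    · rw [hv0] at hvb ⊢; simp only [norm_zero, mul_zero, inner_zero_left]; linarith
    have := hmin _ (inv_norm_smul_mem_sPolar hne
      (sub_innerMin_smul_mem_innerDual hcomp hunit hb1 hε) hv0)
    rw [real_inner_smul_left, inv_mul_eq_div, le_div_iff₀ (norm_pos_iff.2 hv0)] at this
    exact this
  have hv : ‖v‖ ≤ 1 + ε := by
    have := norm_sub_le a (ε • b)
    rwa [norm_smul, Real.norm_of_nonneg hε, ha1, hb1, mul_one] at this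
  have hab : ⟪a, b⟫ ≤ -1 := by nlinarith
  have hab0 : ‖a + b‖ = 0 := by
    have := norm_add_sq_real a b
    rw [ha1, hb1] at this
    nlinarith [norm_nonneg (a + b)]
  obtain ⟨X, hX⟩ := hne
  have := real_inner_le_norm (a + b) X
  rw [hab0, zero_mul, inner_add_left] at this
  linarith [innerMin_le hcomp (Q := a) hX, ProperCone.mem_innerDual.1 hbD hX, real_inner_comm X b]

lemma inner_nonneg_of_mem_sPolar (hcomp : IsCompact C) (hne : C.Nonempty)
    (hunit : ∀ X ∈ C, ‖X‖ = 1) (hW : constWidth C (π / 2)) (ha : a ∈ sPolar C)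
    (hb : b ∈ sPolar C) : 0 ≤ ⟪a, b⟫ := by
  obtain ⟨⟨a₀, b₀⟩, ⟨ha₀, hb₀⟩, hmin⟩ :=
    ((isCompact_sPolar hne).prod (isCompact_sPolar hne)).exists_isMinOn
      (⟨(a, b), ha, hb⟩ : (sPolar C ×ˢ sPolar C).Nonempty)
      (continuous_inner (𝕜 := ℝ)).continuousOn
  have hab : ⟪a₀, b₀⟫ ≤ ⟪a, b⟫ := hmin (mk_mem_prod ha hb)
  refine hab.trans' ?_
  by_contra! hneg
  have h₁ := isSupporting_of_forall_inner_le hcomp hne hunit ha₀ hb₀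
    (fun v hv => hmin (mk_mem_prod hv hb₀)) hneg
  have h₂ := isSupporting_of_forall_inner_le hcomp hne hunit hb₀ ha₀
    (fun v hv => by
      have : ⟪a₀, b₀⟫ ≤ ⟪a₀, v⟫ := hmin (mk_mem_prod ha₀ hv)
      rwa [real_inner_comm b₀ a₀, real_inner_comm v a₀] at this)
    (by rwa [real_inner_comm])
  exact hneg.not_ge (inner_nonneg_of_constWidth hW h₁ h₂)

lemma innerDual_le_innerDual_innerDual_of_constWidth (hcomp : IsCompact C) (hne : C.Nonempty)
    (hunit : ∀ X ∈ C, ‖X‖ = 1) (hW : constWidth C (π / 2)) :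
    ProperCone.innerDual C ≤ ProperCone.innerDual (ProperCone.innerDual C : Set _) := by
  intro v hv
  refine ProperCone.mem_innerDual.2 fun u hu => ?_
  rcases eq_or_ne u 0 with rfl | hu0
  · simp
  rcases eq_or_ne v 0 with rfl | hv0
  · simp
  have := inner_nonneg_of_mem_sPolar hcomp hne hunit hW
    (inv_norm_smul_mem_sPolar hne hu hu0) (inv_norm_smul_mem_sPolar hne hv hv0)
  rw [real_inner_smul_left, real_inner_smul_right] at this
  exact nonneg_of_mul_nonneg_right (nonneg_of_mul_nonneg_right this (by positivity)) (by positivity)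

lemma innerMin_le_inner_of_isSupporting (hcomp : IsCompact C) (hne : C.Nonempty)
    (hunit : ∀ X ∈ C, ‖X‖ = 1) (hW : constWidth C (π / 2)) (hq : isSupporting Q C)
    (ha : 0 ≤ innerMin C a) : innerMin C a ≤ ⟪a, Q⟫ := by
  have := ProperCone.mem_innerDual.1
    (innerDual_le_innerDual_innerDual_of_constWidth hcomp hne hunit hW hq.mem_innerDual)
    (sub_innerMin_smul_mem_innerDual hcomp hunit hq.1 ha)
  rw [inner_sub_left, real_inner_smul_left, real_inner_self_eq_norm_sq, hq.1] at this
  linarith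

end ConstWidth

section SelfPolar

variable {n : ℕ} {C : Set (EuclideanSpace ℝ (Fin (n + 1)))}

lemma add_mem_Ici_smul (hconv : geodesicConvex C) {x y : EuclideanSpace ℝ (Fin (n + 1))}
    (hx : x ∈ Ici (0 : ℝ) • C) (hy : y ∈ Ici (0 : ℝ) • C) : x + y ∈ Ici (0 : ℝ) • C := by
  obtain ⟨r, hr, X, hX, rfl⟩ := mem_smul.1 hx
  obtain ⟨s, hs, Y, hY, rfl⟩ := mem_smul.1 hy
  by_cases h0 : r • X + s • Y = 0
  · rw [h0, ← zero_smul ℝ X]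
    exact smul_mem_smul self_mem_Ici hX
  have hrs : 0 < r + s := by
    refine (add_nonneg hr hs).lt_of_ne fun hrs => h0 ?_
    rw [(add_eq_zero_iff_of_nonneg hr hs).1 hrs.symm |>.1,
      (add_eq_zero_iff_of_nonneg hr hs).1 hrs.symm |>.2, zero_smul, zero_smul, add_zero]
  rw [← smul_inv_smul₀ (norm_ne_zero_iff.2 h0) (r • X + s • Y)]
  exact smul_mem_smul (norm_nonneg _) (hconv X hX Y hY r s hr hs hrs h0)

lemma sPolar_subset_self (hcomp : IsCompact C) (hne : C.Nonempty) (hunit : ∀ X ∈ C, ‖X‖ = 1)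
    (hconv : geodesicConvex C)
    (hacute : ProperCone.innerDual C ≤ ProperCone.innerDual (ProperCone.innerDual C : Set _)) :
    sPolar C ⊆ C := by
  intro w hw
  obtain ⟨hw1, hwD⟩ := (mem_sPolar_iff hne).1 hw
  let K : ProperCone ℝ (EuclideanSpace ℝ (Fin (n + 1))) :=
    { carrier := Ici (0 : ℝ) • C
      add_mem' := add_mem_Ici_smul hconv
      zero_mem' := zero_smul ℝ hne.some ▸ smul_mem_smul self_mem_Ici hne.some_mem
      smul_mem' := by
        rintro c _ ⟨r, hr, X, hX, rfl⟩
        exact ⟨c * r, mul_nonneg c.2 hr, X, hX, mul_smul (c : ℝ) r X⟩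
      isClosed' := isClosed_Ici_smul hcomp hunit }
  -- a functional separating `w` from the cone over `C` would lie in `D` and be obtuse to `w`
  have hwK : w ∈ K := by
    by_contra hwK
    obtain ⟨y, hyK, hwy⟩ := ProperCone.hyperplane_separation' K hwK
    have hyD : y ∈ ProperCone.innerDual C :=
      ProperCone.mem_innerDual.2 fun X hX =>
        hyK X (one_smul ℝ X ▸ smul_mem_smul (mem_Ici.2 zero_le_one) hX)
    exact hwy.not_ge (ProperCone.mem_innerDual.1 (hacute hyD) hwD)
  obtain ⟨r, hr, X, hX, rfl⟩ := mem_smul.1 hwK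
  rw [norm_smul, hunit X hX, mul_one, Real.norm_of_nonneg hr] at hw1
  rwa [hw1, one_smul]

lemma self_subset_sPolar (hcomp : IsCompact C) (hne : C.Nonempty) (hunit : ∀ X ∈ C, ‖X‖ = 1)
    {E : EuclideanSpace ℝ (Fin (n + 1))} (hE : ∀ X ∈ C, 0 < ⟪E, X⟫)
    (hW : constWidth C (π / 2)) : C ⊆ sPolar C := by
  intro z hz
  have hE0 : 0 < innerMin C E := by
    obtain ⟨X, hX, hEX⟩ := exists_inner_eq_innerMin hcomp hne E
    exact hEX ▸ hE X hX
  have hz0 : 0 ≤ innerMin C z := by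
    by_contra! hz0
    obtain ⟨t, ⟨ht0, ht1⟩, hpt⟩ := exists_innerMin_segment_eq_zero hcomp hE0 hz0
    set p := (1 - t) • E + t • z
    have hpz : 0 < ⟪p, z⟫ := by
      simp only [p, inner_add_left, real_inner_smul_left, real_inner_self_eq_norm_sq, hunit z hz]
      nlinarith [hE z hz]
    have hp0 : p ≠ 0 := fun h => by rw [h, inner_zero_left] at hpz; exact hpz.false
    obtain ⟨q, hq, hpq⟩ := exists_isSupporting_inner_eq_zero hcomp hne hunit hW
      (isSupporting_inv_norm_smul hcomp hne hunit hp0 hpt)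
    rw [real_inner_smul_left, mul_eq_zero, inv_eq_zero, norm_eq_zero] at hpq
    have hEq := innerMin_le_inner_of_isSupporting hcomp hne hunit hW hq hE0.le
    have hzq : 0 ≤ ⟪z, q⟫ := ProperCone.mem_innerDual.1 hq.mem_innerDual hz
    have : ⟪p, q⟫ = (1 - t) * ⟪E, q⟫ + t * ⟪z, q⟫ := by
      simp only [p, inner_add_left, real_inner_smul_left]
    nlinarith [hpq.resolve_left hp0]
  exact (mem_sPolar_iff hne).2 ⟨hunit z hz, ProperCone.mem_innerDual.2 fun X hX =>
    real_inner_comm z X ▸ (innerMin_nonneg_iff hcomp hne).1 hz0 X hX⟩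

end SelfPolar

/-- a spherically convex body `C ⊂ Sⁿ` is self-dual (`C = C°`)
iff it is of constant width `π/2`. -/
theorem stmt15 {n : ℕ} (C : Set (EuclideanSpace ℝ (Fin (n + 1))))
    (hC : sConvexBody C) :
    C = sPolar C ↔ constWidth C (π / 2) := by
  obtain ⟨hunit, hclosed, hconv, ⟨E, -, hE⟩, U, -, hUne, hUsub⟩ := hC
  have hne : C.Nonempty := hUne.mono hUsub
  have hcomp : IsCompact C := Metric.isCompact_of_isClosed_isBounded hclosed
    (Metric.isBounded_sphere.subset fun X hX => mem_sphere_zero_iff_norm.2 (hunit X hX))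
  refine ⟨constWidth_of_eq_sPolar, fun hW => ?_⟩
  have hacute := innerDual_le_innerDual_innerDual_of_constWidth hcomp hne hunit hW
  exact (self_subset_sPolar hcomp hne hunit hE hW).antisymm
    (sPolar_subset_self hcomp hne hunit hconv hacute)

end
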